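/- For any integers m, t and r satisfying C(t−1,r) ≤ m ≤ C(t−1,r) + C(t−2,r−1), the Lagrangian of C_{r,m} equals the Lagrangian of the complete r-graph [t−1]^{(r)}: λ(C_{r,m}) = λ([t−1]^{(r)}). -/

import Mathlib

/-- `lagEval E x` is λ(G,x): the sum over the edges of `E` of the product of the
weights (under `x`) of their vertices. -/
def lagEval (E : Finset (Finset ℕ)) (x : ℕ → ℝ) : ℝ :=
  ∑ e ∈ E, ∏ i ∈ e, x i

/-- A feasible weighting: nonnegative entries, finitely supported, total weight 1. -/
def Feasible (x : ℕ → ℝ) : Prop :=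
  (∀ i, 0 ≤ x i) ∧ ∃ S : Finset ℕ, (∀ i ∉ S, x i = 0) ∧ ∑ i ∈ S, x i = 1

/-- A feasible weighting on the vertex set [n] = {1,…,n}. -/
def FeasibleOn (n : ℕ) (x : ℕ → ℝ) : Prop :=
  (∀ i, 0 ≤ x i) ∧ (∀ i ∉ Finset.Icc 1 n, x i = 0) ∧ ∑ i ∈ Finset.Icc 1 n, x i = 1

/-- The Lagrangian λ(G) of a hypergraph with edge set `E`: the supremum (in fact
maximum) of λ(G,x) over all feasible weightings `x`. -/
noncomputable def lagrangian (E : Finset (Finset ℕ)) : ℝ :=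
  sSup {y : ℝ | ∃ x : ℕ → ℝ, Feasible x ∧ lagEval E x = y}

/-- `completeG s r` is [s]^{(r)}, the complete r-graph on {1,…,s}. -/
def completeG (s r : ℕ) : Finset (Finset ℕ) :=
  (Finset.Icc 1 s).powersetCard r

/-- `E` is (the edge set of) an r-graph on the vertex set [n] = {1,…,n}. -/
def IsRGraphOn (r n : ℕ) (E : Finset (Finset ℕ)) : Prop :=
  ∀ e ∈ E, e.card = r ∧ e ⊆ Finset.Icc 1 n

/-- The r-graph `E` contains a clique of order `s` (inside the vertex set `V`):
some `s`-element subset of `V` has all of its `r`-element subsets as edges. -/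
def ContainsCliqueOn (V : Finset ℕ) (r s : ℕ) (E : Finset (Finset ℕ)) : Prop :=
  ∃ S : Finset ℕ, S ⊆ V ∧ S.card = s ∧ S.powersetCard r ⊆ E

/-- `DomLE A B`: `A` and `B` have the same size and, listing both in increasing
order as `i_1 < ⋯ < i_r` and `j_1 < ⋯ < j_r`, one has `i_k ≤ j_k` for all `k`
(equivalently, for every threshold `c`, `A` has at most as many elements above `c`
as `B`). -/
def DomLE (A B : Finset ℕ) : Prop :=
  A.card = B.card ∧
    ∀ c : ℕ, (A.filter fun a => c < a).card ≤ (B.filter fun b => c < b).card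

/-- `E` is left-compressed: together with any edge it contains every set of positive
integers dominating it from the left. -/
def LeftCompressed (E : Finset (Finset ℕ)) : Prop :=
  ∀ B ∈ E, ∀ A : Finset ℕ, (∀ a ∈ A, 1 ≤ a) → DomLE A B → A ∈ E

/-- `nbhd E i` is E_i, the (r-1)-neighborhood of the vertex `i`:
all sets `A` with `i ∉ A` and `A ∪ {i} ∈ E`. -/
def nbhd (E : Finset (Finset ℕ)) (i : ℕ) : Finset (Finset ℕ) :=
  (E.filter fun e => i ∈ e).image fun e => e.erase i

/-- `nbhd2 E i j` is E_{ij}, the (r-2)-neighborhood of the pair of vertices `i, j`. -/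
def nbhd2 (E : Finset (Finset ℕ)) (i j : ℕ) : Finset (Finset ℕ) :=
  (E.filter fun e => i ∈ e ∧ j ∈ e).image fun e => (e.erase i).erase j

/-- `C` consists of the first `m` r-element subsets of {1,2,3,…} in the colex
ordering: it has `m` edges, all of them r-element sets of positive integers, and it
is an initial segment for the colex order. -/
def IsColexSegment (r m : ℕ) (C : Finset (Finset ℕ)) : Prop :=
  C.card = m ∧ (∀ e ∈ C, e.card = r ∧ ∀ a ∈ e, 1 ≤ a) ∧
    ∀ A B : Finset ℕ, A.card = r → (∀ a ∈ A, 1 ≤ a) → B ∈ C →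
      toColex A < toColex B → A ∈ C

/-!
Since `C(t-1,r) ≤ m ≤ C(t-1,r) + C(t-2,r-1)`, the colex segment `C_{r,m}` lies between
`[t-1]^{(r)}` and the next colex segment, which is `[t-1]^{(r)}` together with all sets
`{t} ∪ A`, `A ∈ [t-2]^{(r-1)}`: colex initial segments are nested by size. In that larger graph
the vertex `t` is a non-adjacent twin of `t-1`, so moving the weight of `t` onto `t-1` turns
any weighting into one of `[t-1]^{(r)}` with the same value. Hence all three Lagrangians agree.
-/

open Finset

lemma Feasible.le_one {x : ℕ → ℝ} (hx : Feasible x) (i : ℕ) : x i ≤ 1 := by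
  obtain ⟨hnn, S, hS0, hS1⟩ := hx
  by_cases hi : i ∈ S
  · exact hS1 ▸ single_le_sum (fun j _ => hnn j) hi
  · rw [hS0 i hi]; exact zero_le_one

lemma feasible_single_zero : Feasible (Pi.single 0 1) :=
  ⟨fun i => by by_cases h : i = 0 <;> simp [h], {0}, fun i hi => by simp_all, by simp⟩

lemma bddAbove_lagEval (E : Finset (Finset ℕ)) :
    BddAbove {y : ℝ | ∃ x : ℕ → ℝ, Feasible x ∧ lagEval E x = y} := by
  refine ⟨#E, ?_⟩
  rintro _ ⟨x, hx, rfl⟩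
  calc lagEval E x ≤ ∑ _e ∈ E, (1 : ℝ) :=
        sum_le_sum fun e _ => prod_le_one (fun i _ => hx.1 i) fun i _ => hx.le_one i
    _ = #E := by simp

lemma lagEval_le_lagrangian (E : Finset (Finset ℕ)) {x : ℕ → ℝ} (hx : Feasible x) :
    lagEval E x ≤ lagrangian E :=
  le_csSup (bddAbove_lagEval E) ⟨x, hx, rfl⟩

lemma lagrangian_le_of_forall {E : Finset (Finset ℕ)} {c : ℝ}
    (h : ∀ x, Feasible x → lagEval E x ≤ c) : lagrangian E ≤ c := by
  refine csSup_le ⟨_, _, feasible_single_zero, rfl⟩ ?_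
  rintro _ ⟨x, hx, rfl⟩
  exact h x hx

lemma lagEval_mono {E F : Finset (Finset ℕ)} (h : E ⊆ F) {x : ℕ → ℝ} (hx : ∀ i, 0 ≤ x i) :
    lagEval E x ≤ lagEval F x :=
  sum_le_sum_of_subset_of_nonneg h fun _ _ _ => prod_nonneg fun i _ => hx i

lemma lagrangian_mono {E F : Finset (Finset ℕ)} (h : E ⊆ F) : lagrangian E ≤ lagrangian F :=
  lagrangian_le_of_forall fun _ hx => (lagEval_mono h hx.1).trans (lagEval_le_lagrangian F hx)

lemma lagEval_union {E F : Finset (Finset ℕ)} (h : Disjoint E F) (x : ℕ → ℝ) :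
    lagEval (E ∪ F) x = lagEval E x + lagEval F x :=
  sum_union h

lemma lagEval_image_insert {P : Finset (Finset ℕ)} {i : ℕ} (hP : ∀ A ∈ P, i ∉ A) (x : ℕ → ℝ) :
    lagEval (P.image (insert i)) x = x i * lagEval P x := by
  rw [lagEval, sum_image (insert_erase_invOn.2.injOn.mono hP), lagEval, mul_sum]
  exact sum_congr rfl fun A hA => prod_insert (hP A hA)

lemma lagEval_congr {E : Finset (Finset ℕ)} {x y : ℕ → ℝ} (h : ∀ e ∈ E, ∀ v ∈ e, x v = y v) :
    lagEval E x = lagEval E y :=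
  sum_congr rfl fun e he => prod_congr rfl (h e he)

def mergeWeight (x : ℕ → ℝ) (i j : ℕ) : ℕ → ℝ :=
  Function.update (Function.update x j 0) i (x i + x j)

section mergeWeight

variable {x : ℕ → ℝ} {i j : ℕ}

lemma mergeWeight_apply_of_ne {v : ℕ} (hi : v ≠ i) (hj : v ≠ j) : mergeWeight x i j v = x v := by
  rw [mergeWeight, Function.update_of_ne hi, Function.update_of_ne hj]

lemma mergeWeight_self : mergeWeight x i j i = x i + x j :=
  Function.update_self ..

lemma mergeWeight_apply_right (hij : i ≠ j) : mergeWeight x i j j = 0 := by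
  rw [mergeWeight, Function.update_of_ne hij.symm, Function.update_self]

lemma sum_mergeWeight (hij : i ≠ j) {T : Finset ℕ} (hi : i ∈ T) (hj : j ∈ T) :
    ∑ v ∈ T, mergeWeight x i j v = ∑ v ∈ T, x v := by
  have hj' : j ∈ T \ {i} := by simpa [hij.symm] using hj
  rw [mergeWeight, sum_update_of_mem hi, sum_update_of_mem hj',
    sum_eq_add_sum_sdiff_singleton_of_mem hi, sum_eq_add_sum_sdiff_singleton_of_mem hj']
  ring

lemma Feasible.mergeWeight (hij : i ≠ j) (hx : Feasible x) : Feasible (mergeWeight x i j) := by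
  obtain ⟨hnn, S, hS0, hS1⟩ := hx
  refine ⟨fun v => ?_, insert i (insert j S), fun v hv => ?_, ?_⟩
  · by_cases hvi : v = i
    · rw [hvi, mergeWeight_self]; exact add_nonneg (hnn i) (hnn j)
    by_cases hvj : v = j
    · rw [hvj, mergeWeight_apply_right hij]
    · rw [mergeWeight_apply_of_ne hvi hvj]; exact hnn v
  · simp only [mem_insert, not_or] at hv
    rw [mergeWeight_apply_of_ne hv.1 hv.2.1, hS0 v hv.2.2]
  · rw [sum_mergeWeight hij (mem_insert_self _ _) (mem_insert_of_mem (mem_insert_self _ _)), ← hS1]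
    exact (sum_subset (fun v hv => by simp [hv]) fun v _ hv => hS0 v hv).symm

end mergeWeight

section twin

variable {E P : Finset (Finset ℕ)} {i j : ℕ}

lemma lagEval_union_image_insert_twin (hij : i ≠ j) (hE : ∀ e ∈ E, i ∉ e ∧ j ∉ e)
    (hP : ∀ A ∈ P, i ∉ A ∧ j ∉ A) (x : ℕ → ℝ) :
    lagEval (E ∪ P.image (insert i) ∪ P.image (insert j)) x =
      lagEval (E ∪ P.image (insert i)) (mergeWeight x i j) := by
  have hdisj_i : Disjoint E (P.image (insert i)) := by
    simp only [disjoint_left, mem_image, not_exists, not_and]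
    rintro e he A - rfl
    exact (hE _ he).1 (mem_insert_self i A)
  have hdisj_j : Disjoint (E ∪ P.image (insert i)) (P.image (insert j)) := by
    simp only [disjoint_left, mem_union, mem_image, not_exists, not_and]
    rintro _ (he | ⟨A, hA, rfl⟩) B - hB
    · exact (hE _ he).2 (hB ▸ mem_insert_self j B)
    · have hj : j ∈ insert i A := hB ▸ mem_insert_self j B
      exact (hP A hA).2 ((mem_insert.1 hj).resolve_left hij.symm)
  have hE_eq : lagEval E (mergeWeight x i j) = lagEval E x :=
    lagEval_congr fun e he v hv =>
      mergeWeight_apply_of_ne (fun h => (hE e he).1 (h ▸ hv)) fun h => (hE e he).2 (h ▸ hv)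
  have hP_eq : lagEval P (mergeWeight x i j) = lagEval P x :=
    lagEval_congr fun A hA v hv =>
      mergeWeight_apply_of_ne (fun h => (hP A hA).1 (h ▸ hv)) fun h => (hP A hA).2 (h ▸ hv)
  rw [lagEval_union hdisj_j, lagEval_union hdisj_i, lagEval_union hdisj_i,
    lagEval_image_insert (fun A hA => (hP A hA).1), lagEval_image_insert (fun A hA => (hP A hA).2),
    lagEval_image_insert (fun A hA => (hP A hA).1), hE_eq, hP_eq, mergeWeight_self]
  ring

lemma lagrangian_union_image_insert_twin_le (hij : i ≠ j) (hE : ∀ e ∈ E, i ∉ e ∧ j ∉ e)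
    (hP : ∀ A ∈ P, i ∉ A ∧ j ∉ A) :
    lagrangian (E ∪ P.image (insert i) ∪ P.image (insert j)) ≤
      lagrangian (E ∪ P.image (insert i)) :=
  lagrangian_le_of_forall fun x hx => by
    rw [lagEval_union_image_insert_twin hij hE hP]
    exact lagEval_le_lagrangian _ (hx.mergeWeight hij)

end twin

lemma card_completeG (s r : ℕ) : #(completeG s r) = s.choose r := by
  simp [completeG]

lemma completeG_succ_succ (s k : ℕ) :
    completeG (s + 1) (k + 1) = completeG s (k + 1) ∪ (completeG s k).image (insert (s + 1)) := by
  rw [completeG, ← insert_Icc_right_eq_Icc_add_one (by omega), powersetCard_succ_insert (by simp)]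
  rfl

lemma le_of_mem_completeG {s r : ℕ} {e : Finset ℕ} (he : e ∈ completeG s r) {a : ℕ}
    (ha : a ∈ e) : a ≤ s :=
  (mem_Icc.1 ((mem_powersetCard.1 he).1 ha)).2

/-- `[s+1]^{(k+1)}` together with a vertex `s+2` that is a non-adjacent twin of `s+1`. -/
def cliqueWithTwin (s k : ℕ) : Finset (Finset ℕ) :=
  completeG (s + 1) (k + 1) ∪ (completeG s k).image (insert (s + 2))

lemma card_cliqueWithTwin (s k : ℕ) :
    #(cliqueWithTwin s k) = (s + 1).choose (k + 1) + s.choose k := by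
  have hnot : ∀ A ∈ completeG s k, s + 2 ∉ A := fun A hA h => by
    have := le_of_mem_completeG hA h; omega
  have hdisj : Disjoint (completeG (s + 1) (k + 1)) ((completeG s k).image (insert (s + 2))) := by
    simp only [disjoint_left, mem_image, not_exists, not_and]
    rintro e he A - rfl
    have := le_of_mem_completeG he (mem_insert_self _ A); omega
  rw [cliqueWithTwin, card_union_of_disjoint hdisj,
    card_image_of_injOn (insert_erase_invOn.2.injOn.mono hnot), card_completeG,
    card_completeG]

lemma lagrangian_cliqueWithTwin_le (s k : ℕ) :
    lagrangian (cliqueWithTwin s k) ≤ lagrangian (completeG (s + 1) (k + 1)) := by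
  rw [cliqueWithTwin, completeG_succ_succ]
  have hout : ∀ r, ∀ A ∈ completeG s r, s + 1 ∉ A ∧ s + 2 ∉ A := fun r A hA =>
    ⟨fun h => by have := le_of_mem_completeG hA h; omega,
      fun h => by have := le_of_mem_completeG hA h; omega⟩
  exact lagrangian_union_image_insert_twin_le (by omega) (hout (k + 1)) (hout k)

def IsColexInitSeg (r : ℕ) (C : Finset (Finset ℕ)) : Prop :=
  (∀ e ∈ C, e.card = r ∧ ∀ a ∈ e, 1 ≤ a) ∧
    ∀ A B : Finset ℕ, A.card = r → (∀ a ∈ A, 1 ≤ a) → B ∈ C →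
      toColex A < toColex B → A ∈ C

lemma IsColexSegment.isColexInitSeg {r m : ℕ} {C : Finset (Finset ℕ)}
    (hC : IsColexSegment r m C) : IsColexInitSeg r C :=
  hC.2

namespace IsColexInitSeg

variable {r : ℕ} {C D : Finset (Finset ℕ)}

lemma total (hC : IsColexInitSeg r C) (hD : IsColexInitSeg r D) : C ⊆ D ∨ D ⊆ C := by
  by_contra! h
  obtain ⟨A, hAC, hAD⟩ := not_subset.1 h.1
  obtain ⟨B, hBD, hBC⟩ := not_subset.1 h.2
  rcases lt_trichotomy (toColex A) (toColex B) with hAB | hAB | hAB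
  · exact hAD (hD.2 A B (hC.1 A hAC).1 (hC.1 A hAC).2 hBD hAB)
  · exact hAD (toColex_inj.1 hAB ▸ hBD)
  · exact hBC (hC.2 B A (hD.1 B hBD).1 (hD.1 B hBD).2 hAC hAB)

lemma subset_of_card_le (hC : IsColexInitSeg r C) (hD : IsColexInitSeg r D)
    (h : #C ≤ #D) : C ⊆ D :=
  (hC.total hD).elim id fun hDC => (eq_of_subset_of_card_le hDC h).ge

end IsColexInitSeg

lemma isColexInitSeg_completeG (s r : ℕ) : IsColexInitSeg r (completeG s r) := by
  refine ⟨fun e he => ?_, fun A B hA hApos hB hAB => ?_⟩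
  · obtain ⟨hsub, hcard⟩ := mem_powersetCard.1 he
    exact ⟨hcard, fun a ha => (mem_Icc.1 (hsub ha)).1⟩
  · refine mem_powersetCard.2 ⟨fun a ha => mem_Icc.2 ⟨hApos a ha, ?_⟩, hA⟩
    exact Colex.forall_le_mono hAB.le (fun b hb => le_of_mem_completeG hB hb) a ha

lemma mem_cliqueWithTwin_of_lt_insert {s k : ℕ} {A B : Finset ℕ} (hA : #A = k + 1)
    (hApos : ∀ a ∈ A, 1 ≤ a) (hB : B ∈ completeG s k)
    (hAB : toColex A < toColex (insert (s + 2) B)) : A ∈ cliqueWithTwin s k := by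
  have hBle : ∀ b ∈ B, b ≤ s := fun b hb => le_of_mem_completeG hB hb
  have hAle : ∀ a ∈ A, a ≤ s + 2 := Colex.forall_le_mono hAB.le fun b hb => by
    rcases mem_insert.1 hb with rfl | hb
    · rfl
    · have := hBle b hb; omega
  by_cases htop : s + 2 ∈ A
  · -- `s + 1 ∈ A` would be the largest element of `A ∆ insert (s + 2) B`
    have hnot : s + 1 ∉ A := fun h => by
      obtain ⟨b, hb, hbA, hsb⟩ := (Colex.toColex_lt_toColex.1 hAB).2 h fun h' => by
        rcases mem_insert.1 h' with h' | h'
        · omega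
        · have := hBle _ h'; omega
      rcases mem_insert.1 hb with rfl | hb
      · exact hbA htop
      · have := hBle b hb; omega
    refine mem_union_right _ (mem_image.2 ⟨A.erase (s + 2), mem_powersetCard.2 ⟨?_, ?_⟩,
      insert_erase htop⟩)
    · intro a ha
      obtain ⟨hne, haA⟩ := mem_erase.1 ha
      have := hAle a haA
      have : a ≠ s + 1 := fun h => hnot (h ▸ haA)
      exact mem_Icc.2 ⟨hApos a haA, by omega⟩
    · rw [card_erase_of_mem htop, hA]; rfl
  · refine mem_union_left _ (mem_powersetCard.2 ⟨fun a ha => mem_Icc.2 ⟨hApos a ha, ?_⟩, hA⟩)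
    have := hAle a ha
    have : a ≠ s + 2 := fun h => htop (h ▸ ha)
    omega

lemma isColexInitSeg_cliqueWithTwin (s k : ℕ) : IsColexInitSeg (k + 1) (cliqueWithTwin s k) := by
  have hK := isColexInitSeg_completeG (s + 1) (k + 1)
  refine ⟨fun e he => ?_, fun A B hA hApos hB hAB => ?_⟩
  · rcases mem_union.1 he with he | he
    · exact hK.1 e he
    obtain ⟨A, hA, rfl⟩ := mem_image.1 he
    obtain ⟨hAsub, hAcard⟩ := mem_powersetCard.1 hA
    have hnot : s + 2 ∉ A := fun h => by have := (mem_Icc.1 (hAsub h)).2; omega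
    refine ⟨by rw [card_insert_of_notMem hnot, hAcard], fun a ha => ?_⟩
    rcases mem_insert.1 ha with rfl | ha
    · omega
    · exact (mem_Icc.1 (hAsub ha)).1
  rcases mem_union.1 hB with hB | hB
  · exact mem_union_left _ (hK.2 A B hA hApos hB hAB)
  · obtain ⟨B, hBK, rfl⟩ := mem_image.1 hB
    exact mem_cliqueWithTwin_of_lt_insert hA hApos hBK hAB

/-- For `C(t−1,r) ≤ m ≤ C(t−1,r) + C(t−2,r−1)`, the Lagrangian of `C_{r,m}` (the
first `m` r-sets in colex order) equals the Lagrangian of `[t−1]^{(r)}`. -/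
theorem stmt2 (m t r : ℕ) (hr : 1 ≤ r) (ht : 2 ≤ t)
    (h1 : (t - 1).choose r ≤ m)
    (h2 : m ≤ (t - 1).choose r + (t - 2).choose (r - 1))
    (C : Finset (Finset ℕ)) (hC : IsColexSegment r m C) :
    lagrangian C = lagrangian (completeG (t - 1) r) := by
  obtain ⟨s, rfl⟩ : ∃ s, t = s + 2 := ⟨t - 2, by omega⟩
  obtain ⟨k, rfl⟩ : ∃ k, r = k + 1 := ⟨r - 1, by omega⟩
  rw [show s + 2 - 1 = s + 1 by omega] at h1 h2 ⊢
  rw [show s + 2 - 2 = s by omega, show k + 1 - 1 = k by omega] at h2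
  have hKC : completeG (s + 1) (k + 1) ⊆ C :=
    (isColexInitSeg_completeG _ _).subset_of_card_le hC.isColexInitSeg
      (by rwa [card_completeG, hC.1])
  have hCD : C ⊆ cliqueWithTwin s k :=
    hC.isColexInitSeg.subset_of_card_le (isColexInitSeg_cliqueWithTwin s k)
      (by rwa [card_cliqueWithTwin, hC.1])
  exact le_antisymm ((lagrangian_mono hCD).trans (lagrangian_cliqueWithTwin_le s k))
    (lagrangian_mono hKC)
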